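/- Let V be a finite-dimensional normed vector space and let G₀ ⊆ O(V) be the set of all g ∈ O(V) which arise as limits g = lim_n a_n with a_n ∈ H_n and L_n(a_n) → 0, where H_n ≤ O(V) are subgroups with group-norms L_n. Suppose the semi-metrics d_n(u,v) = inf_{a∈H_n} √(L_n(a)² + ‖au − v‖²) converge uniformly on compact sets to a semi-metric d_∞. Then for u, v ∈ V, d_∞(u,v) = 0 if and only if v = gu for some g in the orbit closure in O(V) of the subgroup generated by G₀. -/

import Mathlib

/-!
Subadditivity of `L n` together with Minkowski's inequality in `ℝ²` makes each `d n` a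
pseudometric, so `d∞ = 0` is an equivalence relation and the isometries moving every point within
its class form a subgroup. Approximating `g ∈ G₀` by `aⱼ` with `L (aⱼ) → 0` shows that this subgroup
contains `G₀`, hence its closure and the orbit closure of that. Conversely, if `d∞ u v = 0`, then
near-optimal `aₙ` satisfy `L (aₙ) → 0` and `aₙ u → v`, and since `O(V)` is compact a subsequence
converges to some `g ∈ G₀` with `g u = v`.
-/

open Set Filter Topology

instance LinearIsometryEquiv.applyMulAction {R E : Type*} [Semiring R] [SeminormedAddCommGroup E]
    [Module R E] : MulAction (E ≃ₗᵢ[R] E) E where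
  smul g x := g x
  one_smul _ := rfl
  mul_smul _ _ _ := rfl

@[simp]
lemma LinearIsometryEquiv.smul_def {R E : Type*} [Semiring R] [SeminormedAddCommGroup E]
    [Module R E] (g : E ≃ₗᵢ[R] E) (x : E) : g • x = g x :=
  rfl

instance LinearIsometryEquiv.isIsometricSMul {R E : Type*} [Semiring R]
    [SeminormedAddCommGroup E] [Module R E] : IsIsometricSMul (E ≃ₗᵢ[R] E) E :=
  ⟨fun g => g.isometry⟩

instance Subgroup.isIsometricSMul {G X : Type*} [Group G] [PseudoEMetricSpace X] [MulAction G X]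
    [IsIsometricSMul G X] (H : Subgroup G) : IsIsometricSMul H X :=
  ⟨fun a => isometry_smul X (a : G)⟩

namespace MulAction

variable {G : Type*} (X : Type*) [Group G] [MulAction G X]

def orbitClosure (C : Subgroup G) : Subgroup G where
  carrier := {g | ∀ x : X, ∃ c ∈ C, c • x = g • x}
  one_mem' _ := ⟨1, C.one_mem, rfl⟩
  mul_mem' {g h} hg hh x := by
    obtain ⟨b, hb, hbx⟩ := hh x
    obtain ⟨c, hc, hcx⟩ := hg (h • x)
    exact ⟨c * b, C.mul_mem hc hb, by rw [mul_smul, hbx, hcx, mul_smul]⟩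
  inv_mem' {g} hg x := by
    obtain ⟨b, hb, hbx⟩ := hg (g⁻¹ • x)
    rw [smul_inv_smul] at hbx
    exact ⟨b⁻¹, C.inv_mem hb, inv_smul_eq_iff.2 hbx.symm⟩

variable {X}

lemma le_orbitClosure {B C : Subgroup G}
    (h : ∀ x : X, {y | ∃ b ∈ B, b • x = y} ⊆ {y | ∃ c ∈ C, c • x = y}) :
    B ≤ orbitClosure X C :=
  fun b hb x => h x ⟨b, hb, rfl⟩

lemma le_orbitClosure_self (C : Subgroup G) : C ≤ orbitClosure X C :=
  le_orbitClosure fun _ => le_rfl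

lemma orbits_orbitClosure (C : Subgroup G) (x : X) :
    {y | ∃ g ∈ orbitClosure X C, g • x = y} = {y | ∃ c ∈ C, c • x = y} := by
  refine Subset.antisymm ?_ fun y ⟨c, hc, hcx⟩ => ⟨c, le_orbitClosure_self C hc, hcx⟩
  rintro _ ⟨g, hg, rfl⟩
  exact hg x

lemma rel_smul_of_mem_closure {r : X → X → Prop} (hr : Equivalence r) {S : Set G}
    (hS : ∀ g ∈ S, ∀ x, r x (g • x)) {g : G} (hg : g ∈ Subgroup.closure S) (x : X) :
    r x (g • x) := by
  induction hg using Subgroup.closure_induction generalizing x with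
  | mem g hg => exact hS g hg x
  | one => exact (one_smul G x).symm ▸ hr.refl x
  | mul g h _ _ hg hh => exact mul_smul g h x ▸ hr.trans (hh x) (hg (h • x))
  | inv g _ hg => simpa only [smul_inv_smul] using hr.symm (hg (g⁻¹ • x))

end MulAction

lemma sqrt_sq_add_sq_add_le (a b c d : ℝ) :
    √((a + c) ^ 2 + (b + d) ^ 2) ≤ √(a ^ 2 + b ^ 2) + √(c ^ 2 + d ^ 2) := by
  simpa [Complex.norm_def, Complex.normSq_apply, sq] using norm_add_le (⟨a, b⟩ : ℂ) ⟨c, d⟩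

section OrbitDist

variable {G X : Type*} [Group G] [PseudoMetricSpace X] [MulAction G X] (L : GroupSeminorm G)

noncomputable def orbitDist (x y : X) : ℝ :=
  ⨅ a : G, √(L a ^ 2 + dist (a • x) y ^ 2)

lemma orbitDist_nonneg (x y : X) : 0 ≤ orbitDist L x y :=
  Real.iInf_nonneg fun _ => Real.sqrt_nonneg _

lemma orbitDist_le (x y : X) (a : G) : orbitDist L x y ≤ √(L a ^ 2 + dist (a • x) y ^ 2) :=
  ciInf_le ⟨0, by rintro _ ⟨b, rfl⟩; positivity⟩ a

lemma orbitDist_self (x : X) : orbitDist L x x = 0 :=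
  le_antisymm (by simpa using orbitDist_le L x x 1) (orbitDist_nonneg L x x)

lemma orbitDist_comm [IsIsometricSMul G X] (x y : X) : orbitDist L x y = orbitDist L y x := by
  suffices h : ∀ x y : X, orbitDist L x y ≤ orbitDist L y x from le_antisymm (h x y) (h y x)
  intro x y
  refine le_ciInf fun b => (orbitDist_le L x y b⁻¹).trans_eq ?_
  rw [map_inv_eq_map, ← dist_smul b, smul_inv_smul, dist_comm]

lemma orbitDist_triangle [IsIsometricSMul G X] (x y z : X) :
    orbitDist L x z ≤ orbitDist L x y + orbitDist L y z := by
  refine le_ciInf_add_ciInf fun a b => (orbitDist_le L x z (b * a)).trans ?_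
  have hdist : dist ((b * a) • x) z ≤ dist (a • x) y + dist (b • y) z := by
    rw [mul_smul, ← dist_smul b (a • x) y]
    exact dist_triangle _ _ _
  calc √(L (b * a) ^ 2 + dist ((b * a) • x) z ^ 2)
      ≤ √((L a + L b) ^ 2 + (dist (a • x) y + dist (b • y) z) ^ 2) := by
        gcongr
        exact (map_mul_le_add L b a).trans_eq (add_comm _ _)
    _ ≤ _ := sqrt_sq_add_sq_add_le _ _ _ _

lemma exists_lt_of_orbitDist_lt {x y : X} {ε : ℝ} (h : orbitDist L x y < ε) :
    ∃ a : G, L a < ε ∧ dist (a • x) y < ε := by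
  obtain ⟨a, ha⟩ := exists_lt_of_ciInf_lt h
  exact ⟨a, (Real.le_sqrt_of_sq_le (le_add_of_nonneg_right (sq_nonneg _))).trans_lt ha,
    (Real.le_sqrt_of_sq_le (le_add_of_nonneg_left (sq_nonneg _))).trans_lt ha⟩

end OrbitDist

section Limit

variable {X : Type*} [PseudoMetricSpace X]

lemma equivalence_of_tendsto_orbitDist {ι : Type*} {G : ι → Type*} [∀ i, Group (G i)]
    [∀ i, MulAction (G i) X] [∀ i, IsIsometricSMul (G i) X] {L : ∀ i, GroupSeminorm (G i)}
    {l : Filter ι} [l.NeBot] {d : X → X → ℝ}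
    (hd : ∀ x y, Tendsto (fun i => orbitDist (L i) x y) l (𝓝 (d x y))) :
    Equivalence fun x y => d x y = 0 := by
  have nonneg x y : 0 ≤ d x y := ge_of_tendsto' (hd x y) fun i => orbitDist_nonneg _ x y
  have comm x y : d x y = d y x := by
    refine tendsto_nhds_unique (hd x y) ?_
    simpa only [orbitDist_comm] using hd y x
  have triangle x y z : d x z ≤ d x y + d y z :=
    le_of_tendsto_of_tendsto' (hd x z) ((hd x y).add (hd y z)) fun i => orbitDist_triangle _ x y z
  refine ⟨fun x => ?_, fun h => (comm _ _).trans h, fun hxy hyz => ?_⟩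
  · exact tendsto_nhds_unique (hd x x) (by simpa only [orbitDist_self] using tendsto_const_nhds)
  · exact le_antisymm ((triangle _ _ _).trans_eq (by rw [hxy, hyz, add_zero])) (nonneg _ _)

lemma exists_seq_tendsto_of_tendsto_orbitDist_zero {G : ℕ → Type*} [∀ n, Group (G n)]
    [∀ n, MulAction (G n) X] {L : ∀ n, GroupSeminorm (G n)} {x y : X}
    (h : Tendsto (fun n => orbitDist (L n) x y) atTop (𝓝 0)) :
    ∃ a : ∀ n, G n, Tendsto (fun n => L n (a n)) atTop (𝓝 0) ∧
      Tendsto (fun n => a n • x) atTop (𝓝 y) := by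
  have hε : Tendsto (fun n : ℕ => orbitDist (L n) x y + 1 / (n + 1)) atTop (𝓝 0) := by
    simpa using h.add tendsto_one_div_add_atTop_nhds_zero_nat
  choose a hLa hax using fun n : ℕ => exists_lt_of_orbitDist_lt (L n)
    (lt_add_of_pos_right (orbitDist (L n) x y) n.one_div_pos_of_nat)
  refine ⟨a, squeeze_zero (fun n => apply_nonneg _ _) (fun n => (hLa n).le) hε, ?_⟩
  exact tendsto_iff_dist_tendsto_zero.2
    (squeeze_zero (fun n => dist_nonneg) (fun n => (hax n).le) hε)

end Limit

section Isometries

variable {𝕜 E : Type*} [NontriviallyNormedField 𝕜] [NormedAddCommGroup E] [NormedSpace 𝕜 E]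

theorem LinearIsometryEquiv.exists_strictMono_tendsto [LocallyCompactSpace 𝕜]
    [FiniteDimensional 𝕜 E] (a : ℕ → E ≃ₗᵢ[𝕜] E) :
    ∃ g : E ≃ₗᵢ[𝕜] E, ∃ φ : ℕ → ℕ, StrictMono φ ∧
      Tendsto (fun j => (a (φ j)).toLinearIsometry.toContinuousLinearMap) atTop
        (𝓝 g.toLinearIsometry.toContinuousLinearMap) := by
  have := FiniteDimensional.proper 𝕜 (E →L[𝕜] E)
  obtain ⟨T, -, φ, hφ, hT⟩ := tendsto_subseq_of_bounded (Metric.isBounded_closedBall (x := 0))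
    fun n => mem_closedBall_zero_iff.2 (a n).toLinearIsometry.norm_toContinuousLinearMap_le
  have hTnorm x : ‖T x‖ = ‖x‖ := by
    refine tendsto_nhds_unique ((((ContinuousLinearMap.apply 𝕜 E x).continuous.tendsto T).comp
      hT).norm) ?_
    simp
  let T' : E →ₗᵢ[𝕜] E := ⟨T, hTnorm⟩
  let g := LinearIsometryEquiv.ofSurjective T' (LinearMap.injective_iff_surjective.1 T'.injective)
  have hgT : g.toLinearIsometry.toContinuousLinearMap = T := by ext; rfl
  exact ⟨g, φ, hφ, hgT ▸ hT⟩

variable {H : ℕ → Subgroup (E ≃ₗᵢ[𝕜] E)} {L : ∀ n, GroupSeminorm (H n)} {d : E → E → ℝ}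

variable (H L) in
def vanishingNormLimits : Set (E ≃ₗᵢ[𝕜] E) :=
  {g | ∃ (φ : ℕ → ℕ) (a : ∀ j, H (φ j)), StrictMono φ ∧
    Tendsto (fun j => (a j : E ≃ₗᵢ[𝕜] E).toLinearIsometry.toContinuousLinearMap) atTop
      (𝓝 g.toLinearIsometry.toContinuousLinearMap) ∧
    Tendsto (fun j => L (φ j) (a j)) atTop (𝓝 0)}

lemma eq_zero_of_mem_vanishingNormLimits
    (hd : ∀ x y, Tendsto (fun n => orbitDist (L n) x y) atTop (𝓝 (d x y)))
    {g : E ≃ₗᵢ[𝕜] E} (hg : g ∈ vanishingNormLimits H L) (x : E) : d x (g x) = 0 := by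
  obtain ⟨φ, a, hφ, hag, hLa⟩ := hg
  have hax : Tendsto (fun j => dist ((a j : E ≃ₗᵢ[𝕜] E) x) (g x)) atTop (𝓝 0) :=
    tendsto_iff_dist_tendsto_zero.1
      (((ContinuousLinearMap.apply 𝕜 E x).continuous.tendsto _).comp hag)
  refine tendsto_nhds_unique ((hd x (g x)).comp hφ.tendsto_atTop) (squeeze_zero
    (fun j => orbitDist_nonneg _ _ _) (fun j => orbitDist_le (L (φ j)) x (g x) (a j)) ?_)
  simpa [Subgroup.smul_def] using ((hLa.pow 2).add (hax.pow 2)).sqrt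

lemma exists_mem_vanishingNormLimits_of_eq_zero [LocallyCompactSpace 𝕜] [FiniteDimensional 𝕜 E]
    (hd : ∀ x y, Tendsto (fun n => orbitDist (L n) x y) atTop (𝓝 (d x y)))
    {x y : E} (h : d x y = 0) : ∃ g ∈ vanishingNormLimits H L, g x = y := by
  obtain ⟨a, hLa, hax⟩ := exists_seq_tendsto_of_tendsto_orbitDist_zero (h ▸ hd x y)
  obtain ⟨g, φ, hφ, hag⟩ :=
    LinearIsometryEquiv.exists_strictMono_tendsto fun n => (a n : E ≃ₗᵢ[𝕜] E)
  refine ⟨g, ⟨φ, fun j => a (φ j), hφ, hag, hLa.comp hφ.tendsto_atTop⟩, ?_⟩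
  exact tendsto_nhds_unique (((ContinuousLinearMap.apply 𝕜 E x).continuous.tendsto _).comp hag)
    (hax.comp hφ.tendsto_atTop)

end Isometries

theorem stmt6_general (V : Type*) [NormedAddCommGroup V] [NormedSpace ℝ V]
    [FiniteDimensional ℝ V]
    (H : ℕ → Subgroup (V ≃ₗᵢ[ℝ] V)) (L : ∀ n, (H n) → ℝ)
    (hLid : ∀ n, L n 1 = 0)
    (hLinv : ∀ n a, L n a⁻¹ = L n a)
    (hLmul : ∀ n a b, L n (a * b) ≤ L n a + L n b)
    (dLim : V → V → ℝ)
    (hconv : ∀ K : Set (V × V), IsCompact K →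
      TendstoUniformlyOn
        (fun n p => ⨅ a : H n,
          Real.sqrt ((L n a) ^ 2 + ‖((a : V ≃ₗᵢ[ℝ] V)) p.1 - p.2‖ ^ 2))
        (fun p => dLim p.1 p.2) atTop K) :
    -- the set `G₀` of limits of elements whose norms `L n` tend to zero
    let coeC : (V ≃ₗᵢ[ℝ] V) → (V →L[ℝ] V) :=
      fun g => g.toLinearIsometry.toContinuousLinearMap
    let G₀ : Set (V ≃ₗᵢ[ℝ] V) :=
      {g | ∃ (φ : ℕ → ℕ) (a : ∀ j, H (φ j)), StrictMono φ ∧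
        Tendsto (fun j => coeC ((a j : V ≃ₗᵢ[ℝ] V))) atTop (nhds (coeC g)) ∧
        Tendsto (fun j => L (φ j) (a j)) atTop (nhds 0)}
    let orbit : Subgroup (V ≃ₗᵢ[ℝ] V) → V → Set V :=
      fun B v => {w | ∃ b ∈ B, b v = w}
    ∃ G : Subgroup (V ≃ₗᵢ[ℝ] V),
      (∀ v, orbit G v = orbit (Subgroup.closure G₀) v) ∧
      (∀ B : Subgroup (V ≃ₗᵢ[ℝ] V),
        (∀ v, orbit B v = orbit (Subgroup.closure G₀) v) → B ≤ G) ∧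
      (∀ u v : V, dLim u v = 0 ↔ ∃ g ∈ G, v = g u) := by
  intro coeC G₀ orbit
  let N n : GroupSeminorm (H n) := ⟨L n, hLid n, hLmul n, hLinv n⟩
  have hd u v : Tendsto (fun n => orbitDist (N n) u v) atTop (𝓝 (dLim u v)) := by
    refine ((hconv {(u, v)} isCompact_singleton).tendsto_at rfl).congr fun n => ?_
    simp only [orbitDist, dist_eq_norm, Subgroup.smul_def, LinearIsometryEquiv.smul_def]
    rfl
  have hG₀ : G₀ = vanishingNormLimits H N := rfl
  refine ⟨MulAction.orbitClosure V (Subgroup.closure G₀), MulAction.orbits_orbitClosure _,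
    fun B hB => MulAction.le_orbitClosure fun v => (hB v).subset, fun u v => ⟨fun h => ?_, ?_⟩⟩
  · obtain ⟨g, hg, rfl⟩ := exists_mem_vanishingNormLimits_of_eq_zero hd h
    exact ⟨g, MulAction.le_orbitClosure_self _ (Subgroup.subset_closure (hG₀ ▸ hg)), rfl⟩
  · rintro ⟨g, hg, rfl⟩
    obtain ⟨c, hc, hcu⟩ := hg u
    rw [← LinearIsometryEquiv.smul_def, ← hcu]
    exact MulAction.rel_smul_of_mem_closure (equivalence_of_tendsto_orbitDist hd)
      (fun g hg => eq_zero_of_mem_vanishingNormLimits hd (hG₀ ▸ hg)) hc u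

/-- Let `V` be a finite-dimensional normed vector space, `H n` subgroups
of the group `O(V)` of norm-preserving linear maps with group-norms `L n`, and suppose the
semi-metrics `d n (u,v) = inf_{a ∈ H n} √(L n a² + ‖a u − v‖²)` converge uniformly on
compact subsets of `V × V` to a semi-metric `dLim`.  Let `G₀` be the set of all limits
`g = lim aₙ` (in the operator norm, along subsequences) of elements `aₙ ∈ H n` with
`L n aₙ → 0`.  Then there is a subgroup `G` of `O(V)` — the orbit closure of the subgroup
generated by `G₀`, i.e. the largest subgroup having the same orbits as it — such that
`dLim(u,v) = 0` iff `v = g u` for some `g ∈ G`. -/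
theorem stmt6 (V : Type*) [NormedAddCommGroup V] [NormedSpace ℝ V]
    [FiniteDimensional ℝ V]
    (H : ℕ → Subgroup (V ≃ₗᵢ[ℝ] V)) (L : ∀ n, (H n) → ℝ)
    (hL0 : ∀ n a, 0 ≤ L n a) (hLid : ∀ n, L n 1 = 0)
    (hLinv : ∀ n a, L n a⁻¹ = L n a)
    (hLmul : ∀ n a b, L n (a * b) ≤ L n a + L n b)
    (dLim : V → V → ℝ)
    (hconv : ∀ K : Set (V × V), IsCompact K →
      TendstoUniformlyOn
        (fun n p => ⨅ a : H n,
          Real.sqrt ((L n a) ^ 2 + ‖((a : V ≃ₗᵢ[ℝ] V)) p.1 - p.2‖ ^ 2))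
        (fun p => dLim p.1 p.2) atTop K) :
    -- the set `G₀` of limits of elements whose norms `L n` tend to zero
    let coeC : (V ≃ₗᵢ[ℝ] V) → (V →L[ℝ] V) :=
      fun g => g.toLinearIsometry.toContinuousLinearMap
    let G₀ : Set (V ≃ₗᵢ[ℝ] V) :=
      {g | ∃ (φ : ℕ → ℕ) (a : ∀ j, H (φ j)), StrictMono φ ∧
        Tendsto (fun j => coeC ((a j : V ≃ₗᵢ[ℝ] V))) atTop (nhds (coeC g)) ∧
        Tendsto (fun j => L (φ j) (a j)) atTop (nhds 0)}
    let orbit : Subgroup (V ≃ₗᵢ[ℝ] V) → V → Set V :=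
      fun B v => {w | ∃ b ∈ B, b v = w}
    ∃ G : Subgroup (V ≃ₗᵢ[ℝ] V),
      (∀ v, orbit G v = orbit (Subgroup.closure G₀) v) ∧
      (∀ B : Subgroup (V ≃ₗᵢ[ℝ] V),
        (∀ v, orbit B v = orbit (Subgroup.closure G₀) v) → B ≤ G) ∧
      (∀ u v : V, dLim u v = 0 ↔ ∃ g ∈ G, v = g u) :=
  stmt6_general V H L hLid hLinv hLmul dLim hconv
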